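/- arXiv:2603.04894 — 6 statements merged into one kernel-verified Lean document; each statement's English description precedes it below -/
import Mathlib

section
/- Let ε ∈ (0,1), δ ∈ (0,1), Δ > 0, and let σ ≥ Δ·√(2·ln(1.25/δ))/ε. Then for any μ, μ' ∈ ℝ with |μ − μ'| ≤ Δ and any measurable set O ⊆ ℝ, the Gaussian measures satisfy gaussianReal μ σ² (O) ≤ e^ε · gaussianReal μ' σ² (O) + δ. That is, the one-dimensional Gaussian mechanism with noise scale σ applied to a statistic of sensitivity Δ is (ε, δ)-differentially private. -/
/-!
The privacy loss `x ↦ log (p_μ(x) / p_μ'(x))` of `N(μ, σ²)` against `N(μ', σ²)` is affine in `x`,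
so under `N(μ, σ²)` it is itself Gaussian, with variance `w = (μ - μ')² / σ²` and mean `w / 2`.
Where the loss is at most `ε`, the first density is at most `e^ε` times the second; hence
`P(O) ≤ e^ε Q(O) + P(loss > ε)`, and the last term is a Gaussian tail at
`a = ε / √w - √w / 2 ≥ K - 1 / (2K)` standard deviations, where `K = √(2 log (1.25 / δ))`.
For `a ≥ 0` the bound `e^{-a²/2} / 2 ≤ e^{1/2} δ / 2.5` suffices; `a ≤ 0` forces `δ ≥ 15/16`,
and then even the crude bound `1/2 + |a| / √(2π)` is below `δ`.
-/

open MeasureTheory ProbabilityTheory Real Set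
open scoped NNReal ENNReal

lemma measure_le_mul_add_measure_compl {α : Type*} [MeasurableSpace α] {P Q : Measure α}
    {r : ℝ≥0∞} {S : Set α} (h : P.restrict S ≤ r • Q) (O : Set α) :
    P O ≤ r * Q O + P Sᶜ :=
  calc P O ≤ P (O ∩ S) + P (O \ S) := measure_le_inter_add_sdiff P O S
    _ ≤ P.restrict S O + P Sᶜ :=
        add_le_add (Measure.le_restrict_apply S O) (measure_mono fun _ hx ↦ hx.2)
    _ ≤ r * Q O + P Sᶜ := by gcongr; exact h O

lemma MeasureTheory.Measure.restrict_withDensity_le_smul_withDensity {α : Type*}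
    [MeasurableSpace α] {ν : Measure α} {f g : α → ℝ≥0∞} {r : ℝ≥0∞} {S : Set α}
    (hS : MeasurableSet S) (hg : Measurable g) (hfg : ∀ x ∈ S, f x ≤ r * g x) :
    (ν.withDensity f).restrict S ≤ r • ν.withDensity g :=
  calc (ν.withDensity f).restrict S = (ν.restrict S).withDensity f := restrict_withDensity hS f
    _ ≤ (ν.restrict S).withDensity (r • g) :=
        withDensity_mono ((ae_restrict_iff' hS).2 (.of_forall hfg))
    _ = (ν.withDensity (r • g)).restrict S := (restrict_withDensity hS _).symm
    _ ≤ r • ν.withDensity g := by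
        rw [withDensity_smul r hg]; exact Measure.restrict_le_self

noncomputable def gaussianPrivacyLoss (μ μ' : ℝ) (v : ℝ≥0) (x : ℝ) : ℝ :=
  (μ - μ') * (2 * x - μ - μ') / (2 * v)

lemma measurable_gaussianPrivacyLoss (μ μ' : ℝ) (v : ℝ≥0) :
    Measurable (gaussianPrivacyLoss μ μ' v) := by
  unfold gaussianPrivacyLoss; fun_prop

lemma gaussianPDFReal_eq_exp_gaussianPrivacyLoss_mul (μ μ' : ℝ) (v : ℝ≥0) (x : ℝ) :
    gaussianPDFReal μ v x = exp (gaussianPrivacyLoss μ μ' v x) * gaussianPDFReal μ' v x := by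
  simp only [gaussianPDFReal, gaussianPrivacyLoss]
  rw [mul_left_comm, ← exp_add]
  congr 2
  ring

lemma gaussianReal_restrict_le_smul {μ μ' r : ℝ} {v : ℝ≥0} (hv : v ≠ 0) {S : Set ℝ}
    (hS : MeasurableSet S) (hloss : ∀ x ∈ S, gaussianPrivacyLoss μ μ' v x ≤ r) :
    (gaussianReal μ v).restrict S ≤ ENNReal.ofReal (exp r) • gaussianReal μ' v := by
  rw [gaussianReal_of_var_ne_zero μ hv, gaussianReal_of_var_ne_zero μ' hv]
  refine Measure.restrict_withDensity_le_smul_withDensity hS (measurable_gaussianPDF μ' v)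
    fun x hx ↦ ?_
  rw [gaussianPDF, gaussianPDF, ← ENNReal.ofReal_mul (exp_nonneg r),
    gaussianPDFReal_eq_exp_gaussianPrivacyLoss_mul μ μ' v x]
  gcongr
  · exact gaussianPDFReal_nonneg _ _ _
  · exact hloss x hx

lemma gaussianReal_map_gaussianPrivacyLoss (μ μ' : ℝ) (v : ℝ≥0) :
    (gaussianReal μ v).map (gaussianPrivacyLoss μ μ' v) =
      gaussianReal ((μ - μ') ^ 2 / v / 2) ⟨(μ - μ') ^ 2 / v, by positivity⟩ := by
  have hloss : gaussianPrivacyLoss μ μ' v =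
      (· + -((μ - μ') * (μ + μ') / (2 * v))) ∘ ((μ - μ') / v * ·) := by
    ext x; simp only [gaussianPrivacyLoss, Function.comp_apply]; ring
  rw [hloss, ← Measure.map_map (by fun_prop) (by fun_prop), gaussianReal_map_const_mul,
    gaussianReal_map_add_const]
  congr 1
  · ring
  · ext
    change ((μ - μ') / v) ^ 2 * v = (μ - μ') ^ 2 / v
    rcases eq_or_ne (v : ℝ) 0 with hv | hv
    · simp [hv]
    · field_simp

lemma gaussianReal_le_smul_volume (m : ℝ) {v : ℝ≥0} (hv : v ≠ 0) :
    gaussianReal m v ≤ ENNReal.ofReal (√(2 * π * v))⁻¹ • volume := by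
  rw [gaussianReal_of_var_ne_zero m hv, ← withDensity_const]
  refine withDensity_mono (.of_forall fun x ↦ ENNReal.ofReal_le_ofReal ?_)
  rw [gaussianPDFReal]
  refine mul_le_of_le_one_right (by positivity) (exp_le_one_iff.2 ?_)
  rw [neg_div]; exact neg_nonpos.2 (by positivity)

lemma gaussianReal_Ioi_self (m : ℝ) {v : ℝ≥0} (hv : v ≠ 0) :
    gaussianReal m v (Ioi m) = 2⁻¹ := by
  have := nullSingletonClass_gaussianReal (μ := m) hv
  have hrefl : (gaussianReal m v).map (2 * m - ·) = gaussianReal m v := by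
    rw [gaussianReal_map_const_sub]; ring_nf
  have hsymm : gaussianReal m v (Iic m) = gaussianReal m v (Ioi m) := by
    rw [measure_congr Iio_ae_eq_Iic.symm]
    nth_rw 1 [← hrefl]
    rw [Measure.map_apply (by fun_prop) measurableSet_Iio]
    congr 1; ext x; simp only [mem_preimage, mem_Iio, mem_Ioi]; constructor <;> intro <;> linarith
  have h := measure_add_measure_compl (μ := gaussianReal m v) (measurableSet_Ioi (a := m))
  rw [compl_Ioi, hsymm, measure_univ, ← two_mul] at h
  exact ENNReal.eq_inv_of_mul_eq_one_left (by rw [mul_comm, h])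

lemma gaussianReal_Ioi_add_mul_sqrt_le_of_nonneg (m : ℝ) {v : ℝ≥0} (hv : v ≠ 0) {a : ℝ}
    (ha : 0 ≤ a) :
    gaussianReal m v (Ioi (m + a * √v)) ≤ ENNReal.ofReal (exp (-a ^ 2 / 2) / 2) := by
  set t := m + a * √v
  have hv' : (0 : ℝ) < v := by positivity
  have hloss : ∀ x ∈ Ioi t, gaussianPrivacyLoss m t v x ≤ -a ^ 2 / 2 := by
    intro x (hx : t < x)
    rw [gaussianPrivacyLoss, div_le_iff₀ (by positivity)]
    have hsq : √(v : ℝ) ^ 2 = v := sq_sqrt hv'.le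
    have : a * √v * (a * √v) ≤ a * √v * (2 * x - m - t) := by gcongr; linarith
    nlinarith
  calc gaussianReal m v (Ioi t) = (gaussianReal m v).restrict (Ioi t) (Ioi t) :=
        (Measure.restrict_apply_self _ _).symm
    _ ≤ ENNReal.ofReal (exp (-a ^ 2 / 2)) * gaussianReal t v (Ioi t) :=
        gaussianReal_restrict_le_smul hv measurableSet_Ioi hloss _
    _ = ENNReal.ofReal (exp (-a ^ 2 / 2) / 2) := by
        rw [gaussianReal_Ioi_self t hv, ENNReal.ofReal_div_of_pos two_pos, ENNReal.ofReal_ofNat]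
        exact (div_eq_mul_inv _ _).symm

lemma gaussianReal_Ioi_add_mul_sqrt_le_of_nonpos (m : ℝ) {v : ℝ≥0} (hv : v ≠ 0) {a : ℝ}
    (ha : a ≤ 0) :
    gaussianReal m v (Ioi (m + a * √v)) ≤ ENNReal.ofReal (1 / 2 - a / √(2 * π)) := by
  set t := m + a * √v
  have ht : t ≤ m := by
    have : a * √v ≤ 0 := mul_nonpos_of_nonpos_of_nonneg ha (by positivity)
    linarith
  calc gaussianReal m v (Ioi t) ≤ gaussianReal m v (Ioc t m) + gaussianReal m v (Ioi m) := by
        rw [← Ioc_union_Ioi_eq_Ioi ht]; exact measure_union_le _ _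
    _ ≤ ENNReal.ofReal (√(2 * π * v))⁻¹ * volume (Ioc t m) + 2⁻¹ :=
        add_le_add (gaussianReal_le_smul_volume m hv _) (gaussianReal_Ioi_self m hv).le
    _ = ENNReal.ofReal (1 / 2 - a / √(2 * π)) := by
        rw [volume_Ioc, ← ENNReal.ofReal_mul (by positivity), ← ENNReal.ofReal_ofNat,
          ← ENNReal.ofReal_inv_of_pos two_pos, ← ENNReal.ofReal_add (by positivity) (by norm_num)]
        congr 1
        rw [sqrt_mul (by positivity)]
        field_simp
        ring

lemma sqrt_two_mul_log_div_pos {δ : ℝ} (hδ0 : 0 < δ) (hδ1 : δ < 1) :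
    0 < √(2 * log (1.25 / δ)) :=
  sqrt_pos.2 (mul_pos two_pos (log_pos (by rw [lt_div_iff₀ hδ0]; linarith)))

lemma two_mul_sq_sub_one_le_two_mul_mul {K a : ℝ} (hK : 0 < K) (ha : K - (2 * K)⁻¹ ≤ a) :
    2 * K ^ 2 - 1 ≤ 2 * K * a := by
  have := mul_le_mul_of_nonneg_left ha (by positivity : 0 ≤ 2 * K)
  rw [mul_sub, mul_inv_cancel₀ (by positivity)] at this
  linarith [sq K]

lemma half_exp_neg_sq_div_two_le {δ a : ℝ} (hδ0 : 0 < δ) (hδ1 : δ < 1)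
    (ha : √(2 * log (1.25 / δ)) - (2 * √(2 * log (1.25 / δ)))⁻¹ ≤ a) :
    exp (-a ^ 2 / 2) / 2 ≤ δ := by
  set L := log (1.25 / δ)
  set K := √(2 * L)
  have hK : 0 < K := sqrt_two_mul_log_div_pos hδ0 hδ1
  have hK2 : K ^ 2 = 2 * L := sq_sqrt (sqrt_pos.1 hK).le
  have hδL : exp (-L) = δ / 1.25 := by
    rw [exp_neg, exp_log (by positivity)]; field_simp
  -- `a² ≥ 2Ka - K² ≥ K² - 1`
  have hsq : 2 * L - 1 ≤ a ^ 2 := by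
    nlinarith [sq_nonneg (a - K), two_mul_sq_sub_one_le_two_mul_mul hK ha]
  have hexp_half : exp (1 / 2) ≤ 2.5 := by
    have h : exp (1 / 2) ^ 2 = exp 1 := by rw [← exp_nat_mul]; norm_num
    nlinarith [exp_one_lt_d9, exp_pos (1 / 2)]
  calc exp (-a ^ 2 / 2) / 2 ≤ exp (1 / 2 + -L) / 2 := by gcongr; linarith
    _ = exp (1 / 2) / 2.5 * δ := by rw [exp_add, hδL]; ring
    _ ≤ δ := mul_le_of_le_one_left hδ0.le ((div_le_one (by norm_num)).2 hexp_half)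

lemma half_sub_div_sqrt_two_pi_le {δ a : ℝ} (hδ0 : 0 < δ) (hδ1 : δ < 1) (ha0 : a ≤ 0)
    (ha : √(2 * log (1.25 / δ)) - (2 * √(2 * log (1.25 / δ)))⁻¹ ≤ a) :
    1 / 2 - a / √(2 * π) ≤ δ := by
  set L := log (1.25 / δ)
  set K := √(2 * L)
  have hL : log 1.25 ≤ L := log_le_log (by norm_num) (by rw [le_div_iff₀ hδ0]; linarith)
  have hlog : (0.2 : ℝ) ≤ log 1.25 := by
    have := one_sub_inv_le_log_of_pos (by norm_num : (0 : ℝ) < 1.25)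
    norm_num at this ⊢; linarith
  have hK : 0 < K := sqrt_two_mul_log_div_pos hδ0 hδ1
  have hK2 : K ^ 2 = 2 * L := sq_sqrt (sqrt_pos.1 hK).le
  have h2Ka := two_mul_sq_sub_one_le_two_mul_mul hK ha
  have hL4 : L ≤ 1 / 4 := by nlinarith
  have hδ : 15 / 16 ≤ δ := by
    have h1 : 1.25 / δ ≤ exp (1 / 4) := by
      rw [← exp_log (by positivity : 0 < 1.25 / δ)]; gcongr
    have h2 : exp (1 / 4) * exp (-(1 / 4)) = 1 := by rw [← exp_add]; norm_num
    have h3 := add_one_le_exp (-(1 / 4))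
    rw [div_le_iff₀ hδ0] at h1
    nlinarith [exp_pos (1 / 4)]
  have hK_lb : 0.6 ≤ K := by nlinarith
  have ha_lb : -(1 / 4) ≤ a := by nlinarith
  have hpi : 1 ≤ √(2 * π) := by rw [one_le_sqrt]; linarith [pi_gt_three]
  have : -a / √(2 * π) ≤ -a := div_le_self (by linarith) hpi
  rw [sub_eq_add_neg, ← neg_div]
  linarith

lemma gaussianReal_half_var_Ioi_le {ε δ : ℝ} {w : ℝ≥0} (hε : ε < 1) (hδ0 : 0 < δ) (hδ1 : δ < 1)
    (hw : √w * √(2 * log (1.25 / δ)) ≤ ε) :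
    gaussianReal (w / 2) w (Ioi ε) ≤ ENNReal.ofReal δ := by
  set K := √(2 * log (1.25 / δ))
  have hK : 0 < K := sqrt_two_mul_log_div_pos hδ0 hδ1
  rcases eq_or_ne w 0 with rfl | hw0
  · have hε0 : 0 ≤ ε := by simpa using hw
    simp [not_lt.2 hε0]
  set s := √(w : ℝ)
  have hs : 0 < s := sqrt_pos.2 (by positivity)
  set a := ε / s - s / 2
  have hε_eq : ε = w / 2 + a * s := by
    have hsw : s ^ 2 = w := sq_sqrt w.2
    rw [← hsw]; simp only [a]; field_simp; ring
  have ha : K - (2 * K)⁻¹ ≤ a := by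
    have h1 : K ≤ ε / s := by rw [le_div_iff₀ hs]; linarith
    have h2 : s / 2 ≤ (2 * K)⁻¹ := by
      rw [← one_div, div_le_div_iff₀ two_pos (by positivity)]; nlinarith
    simp only [a]; linarith
  rw [hε_eq]
  rcases le_total 0 a with ha0 | ha0
  · exact (gaussianReal_Ioi_add_mul_sqrt_le_of_nonneg _ hw0 ha0).trans
      (ENNReal.ofReal_le_ofReal (half_exp_neg_sq_div_two_le hδ0 hδ1 ha))
  · exact (gaussianReal_Ioi_add_mul_sqrt_le_of_nonpos _ hw0 ha0).trans
      (ENNReal.ofReal_le_ofReal (half_sub_div_sqrt_two_pi_le hδ0 hδ1 ha0 ha))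

theorem gaussian_mechanism_dp_general
    (ε δ Δ σ : ℝ) (hε : ε ∈ Set.Ioo (0 : ℝ) 1) (hδ : δ ∈ Set.Ioo (0 : ℝ) 1)
    (hΔ : 0 < Δ) (hσ : σ ≥ Δ * Real.sqrt (2 * Real.log (1.25 / δ)) / ε)
    (μ μ' : ℝ) (hμ : |μ - μ'| ≤ Δ) (O : Set ℝ) :
    gaussianReal μ ⟨σ ^ 2, sq_nonneg σ⟩ O
      ≤ ENNReal.ofReal (Real.exp ε) * gaussianReal μ' ⟨σ ^ 2, sq_nonneg σ⟩ O
        + ENNReal.ofReal δ := by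
  obtain ⟨hε0, hε1⟩ := hε
  obtain ⟨hδ0, hδ1⟩ := hδ
  set v : ℝ≥0 := ⟨σ ^ 2, sq_nonneg σ⟩
  set K := √(2 * log (1.25 / δ))
  have hK : 0 < K := sqrt_two_mul_log_div_pos hδ0 hδ1
  have hσ0 : 0 < σ := (div_pos (mul_pos hΔ hK) hε0).trans_le hσ
  have hv : v ≠ 0 := by rw [ne_eq, ← NNReal.coe_eq_zero]; exact pow_ne_zero 2 hσ0.ne'
  have hmeas := measurable_gaussianPrivacyLoss μ μ' v
  have hrestrict := gaussianReal_restrict_le_smul (μ' := μ') (r := ε) hv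
    (measurableSet_le hmeas measurable_const) fun _ hx ↦ hx
  refine (measure_le_mul_add_measure_compl hrestrict O).trans (add_le_add_right ?_ _)
  have hcompl : {x | gaussianPrivacyLoss μ μ' v x ≤ ε}ᶜ = gaussianPrivacyLoss μ μ' v ⁻¹' Ioi ε := by
    ext; simp
  rw [hcompl, ← Measure.map_apply hmeas measurableSet_Ioi, gaussianReal_map_gaussianPrivacyLoss]
  refine gaussianReal_half_var_Ioi_le hε1 hδ0 hδ1 ?_
  change √((μ - μ') ^ 2 / σ ^ 2) * K ≤ ε
  rw [sqrt_div' _ (sq_nonneg σ), sqrt_sq_eq_abs, sqrt_sq hσ0.le, div_mul_eq_mul_div,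
    div_le_iff₀ hσ0]
  rw [ge_iff_le, div_le_iff₀ hε0] at hσ
  nlinarith [mul_le_mul_of_nonneg_left hμ hK.le]

/-- The one-dimensional Gaussian mechanism: for `ε, δ ∈ (0,1)`, sensitivity `Δ > 0`
and noise scale `σ ≥ Δ·√(2 ln(1.25/δ))/ε`, the Gaussian measures with means at
distance at most `Δ` and variance `σ²` are `(ε, δ)`-indistinguishable. -/
theorem gaussian_mechanism_dp
    (ε δ Δ σ : ℝ) (hε : ε ∈ Set.Ioo (0 : ℝ) 1) (hδ : δ ∈ Set.Ioo (0 : ℝ) 1)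
    (hΔ : 0 < Δ) (hσ : σ ≥ Δ * Real.sqrt (2 * Real.log (1.25 / δ)) / ε)
    (μ μ' : ℝ) (hμ : |μ - μ'| ≤ Δ) (O : Set ℝ) (hO : MeasurableSet O) :
    gaussianReal μ ⟨σ ^ 2, sq_nonneg σ⟩ O
      ≤ ENNReal.ofReal (Real.exp ε) * gaussianReal μ' ⟨σ ^ 2, sq_nonneg σ⟩ O
        + ENNReal.ofReal δ :=
  gaussian_mechanism_dp_general ε δ Δ σ hε hδ hΔ hσ μ μ' hμ O
end

section
/- Let ε ∈ (0,1), δ ∈ (0,1), Δ > 0, σ ≥ Δ·√(2·ln(1.25/δ))/ε, and let μ, μ' ∈ ℝ with |μ − μ'| ≤ Δ. Then the set of points where the log-likelihood ratio of N(μ, σ²) against N(μ', σ²) exceeds ε, namely { x ∈ ℝ : (x − μ')² − (x − μ)² > 2σ²ε }, has measure at most δ under the Gaussian measure gaussianReal μ σ². -/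
open MeasureTheory ProbabilityTheory Real Set
open scoped NNReal ENNReal

/-!
Write `a = μ - μ'`. The privacy loss `(x - μ')² - (x - μ)² = 2a(x - μ) + a²` is affine in `x`, so
under `N(μ, σ²)` the event is a one-sided tail of `N(0, a²σ²)`. With `c = √(2 log(1.25/δ))`, i.e.
`δ = 1.25 e^{-c²/2}`, the threshold lies at least `s = c - ε/(2c)` standard deviations from the
mean as soon as `|a| c ≤ σ ε`. If `s ≥ 0`, the tail is at most `e^{-s²/2}/2` and
`s² ≥ c² - 1` gives `e^{-s²/2}/2 ≤ (√e/2) e^{-c²/2} ≤ δ`. If `s < 0`, then `c² < 1/2`, so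
`δ > 15/16`, while `δ < 1` keeps `c² ≥ 0.4`; then the crude bound `1/2 + |s|/√(2π) ≤ 5/6`
suffices.
-/

lemma mul_mul_sub_div_le_of_mul_le {a c σ ε : ℝ} (ha : 0 ≤ a) (hc : 0 < c) (hσ : 0 ≤ σ)
    (h : a * c ≤ σ * ε) : a * σ * (c - ε / (2 * c)) ≤ (2 * σ ^ 2 * ε - a ^ 2) / 2 := by
  have hfactor : (2 * σ ^ 2 * ε - a ^ 2) / 2 - a * σ * (c - ε / (2 * c)) =
      (σ * ε - a * c) * (a + 2 * c * σ) / (2 * c) := by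
    field_simp
    ring
  have := sub_nonneg.2 h
  have : 0 ≤ (σ * ε - a * c) * (a + 2 * c * σ) / (2 * c) := by positivity
  linarith

lemma mul_exp_neg_sq_sqrt_two_mul_log_div_two {δ : ℝ} (hδ0 : 0 < δ) (hδ : δ ≤ 1.25) :
    1.25 * exp (-√(2 * log (1.25 / δ)) ^ 2 / 2) = δ := by
  have hlog : 0 ≤ log (1.25 / δ) := log_nonneg (by rw [le_div_iff₀ hδ0]; linarith)
  rw [sq_sqrt (by linarith), show -(2 * log (1.25 / δ)) / 2 = -log (1.25 / δ) by ring, exp_neg,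
    exp_log (by positivity)]
  field_simp

lemma exp_neg_sq_sub_div_le {c ε : ℝ} (hc : c ≠ 0) (hε : ε ≤ 1) :
    exp (-(c - ε / (2 * c)) ^ 2 / 2) / 2 ≤ 1.25 * exp (-c ^ 2 / 2) := by
  have hsq : c ^ 2 - 1 ≤ (c - ε / (2 * c)) ^ 2 := by
    have : (c - ε / (2 * c)) ^ 2 = c ^ 2 - ε + (ε / (2 * c)) ^ 2 := by field_simp; ring
    nlinarith [sq_nonneg (ε / (2 * c))]
  have hexp : exp (-(c - ε / (2 * c)) ^ 2 / 2) ≤ exp (1 / 2) * exp (-c ^ 2 / 2) := by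
    rw [← exp_add]
    exact exp_le_exp.2 (by linarith)
  have hexp_half : exp (1 / 2) ≤ 2.5 := by
    have : exp (1 / 2) * exp (1 / 2) = exp 1 := by rw [← exp_add]; norm_num
    nlinarith [exp_one_lt_d9, exp_pos (1 / 2)]
  nlinarith [exp_pos (-c ^ 2 / 2)]

lemma div_sqrt_two_pi_add_half_le {c ε : ℝ} (hc : 0 < c) (hε : ε ≤ 1)
    (hs : c - ε / (2 * c) < 0) (h_le_one : 1.25 * exp (-c ^ 2 / 2) ≤ 1) :
    (ε / (2 * c) - c) / √(2 * π) + 1 / 2 ≤ 1.25 * exp (-c ^ 2 / 2) := by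
  have hc_sq_lt : 2 * c ^ 2 < ε := by
    have := sub_neg.1 hs
    rw [lt_div_iff₀ (by positivity)] at this
    nlinarith
  have hc_sq_ge : 0.4 ≤ c ^ 2 := by nlinarith [add_one_le_exp (-c ^ 2 / 2)]
  have h_ge : 15 / 16 ≤ 1.25 * exp (-c ^ 2 / 2) := by
    have : exp (-(1 / 4)) ≤ exp (-c ^ 2 / 2) := exp_le_exp.2 (by linarith)
    nlinarith [add_one_le_exp (-(1 / 4))]
  have hsqrt : 2.5 ≤ √(2 * π) := by
    rw [le_sqrt (by norm_num) (by positivity)]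
    nlinarith [pi_gt_d2]
  have hgap : ε / (2 * c) - c ≤ 5 / 6 := by
    have : 0.6 < c := by nlinarith
    rw [div_sub' (by positivity), div_le_iff₀ (by positivity)]
    nlinarith
  have : (ε / (2 * c) - c) / √(2 * π) ≤ 1 / 3 := by
    rw [div_le_iff₀ (by positivity)]
    nlinarith
  linarith

namespace ProbabilityTheory

section Tail

variable {m : ℝ} {v : ℝ≥0}

lemma gaussianReal_Ioi_self (hv : v ≠ 0) : gaussianReal m v (Ioi m) = 2⁻¹ := by
  have := nullSingletonClass_gaussianReal (μ := m) hv
  have hreflect : gaussianReal m v (Iio m) = gaussianReal m v (Ioi m) := by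
    have h := gaussianReal_map_const_sub (μ := m) (v := v) (2 * m)
    rw [show 2 * m - m = m by ring] at h
    conv_lhs => rw [← h]
    rw [Measure.map_apply (by fun_prop) measurableSet_Iio]
    congr 1
    ext x
    simp only [mem_preimage, mem_Iio, mem_Ioi]
    constructor <;> intro hx <;> linarith
  have htotal := prob_add_prob_compl (μ := gaussianReal m v) (measurableSet_Ici (a := m))
  rw [compl_Ici, hreflect, ← measure_congr Ioi_ae_eq_Ici, ← two_mul] at htotal
  exact ENNReal.eq_inv_of_mul_eq_one_left (by rwa [mul_comm])

lemma gaussianPDFReal_le (x : ℝ) : gaussianPDFReal m v x ≤ (√(2 * π * v))⁻¹ := by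
  rw [gaussianPDFReal]
  refine mul_le_of_le_one_right (by positivity) (exp_le_one_iff.mpr ?_)
  exact div_nonpos_of_nonpos_of_nonneg (neg_nonpos.mpr (sq_nonneg _)) (by positivity)

lemma gaussianPDFReal_le_exp_mul {t x : ℝ} (ht : 0 ≤ t) (hx : m + √v * t ≤ x) :
    gaussianPDFReal m v x ≤ exp (-t ^ 2 / 2) * gaussianPDFReal (m + √v * t) v x := by
  rcases eq_or_ne v 0 with rfl | hv
  · simp
  have hsq : √(v : ℝ) ^ 2 = v := sq_sqrt v.2
  simp only [gaussianPDFReal]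
  rw [mul_left_comm, ← exp_add]
  gcongr
  rw [show -t ^ 2 / 2 = -(v * t ^ 2) / (2 * v) by field_simp, ← add_div,
    div_le_div_iff_of_pos_right (by positivity)]
  nlinarith [mul_nonneg (mul_nonneg (sqrt_nonneg (v : ℝ)) ht) (sub_nonneg.mpr hx)]

lemma gaussianReal_Ioi_add_sqrt_mul_le (hv : v ≠ 0) {t : ℝ} (ht : 0 ≤ t) :
    gaussianReal m v (Ioi (m + √v * t)) ≤ ENNReal.ofReal (exp (-t ^ 2 / 2) / 2) := by
  set c := m + √v * t
  calc gaussianReal m v (Ioi c)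
      ≤ ∫⁻ x in Ioi c, ENNReal.ofReal (exp (-t ^ 2 / 2)) * gaussianPDF c v x := by
        rw [gaussianReal_apply m hv]
        refine setLIntegral_mono' measurableSet_Ioi fun x hx ↦ ?_
        rw [gaussianPDF, gaussianPDF, ← ENNReal.ofReal_mul (exp_nonneg _)]
        exact ENNReal.ofReal_le_ofReal (gaussianPDFReal_le_exp_mul ht hx.le)
    _ = ENNReal.ofReal (exp (-t ^ 2 / 2)) * gaussianReal c v (Ioi c) := by
        rw [lintegral_const_mul _ (measurable_gaussianPDF _ _), gaussianReal_apply c hv]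
    _ = ENNReal.ofReal (exp (-t ^ 2 / 2) / 2) := by
        rw [gaussianReal_Ioi_self hv, ENNReal.ofReal_div_of_pos two_pos, ENNReal.ofReal_ofNat,
          ← div_eq_mul_inv]

lemma gaussianReal_le_mul_volume (hv : v ≠ 0) (s : Set ℝ) :
    gaussianReal m v s ≤ ENNReal.ofReal (√(2 * π * v))⁻¹ * volume s := by
  rw [gaussianReal_apply m hv, ← setLIntegral_const]
  exact setLIntegral_mono measurable_const fun x _ ↦ ENNReal.ofReal_le_ofReal (gaussianPDFReal_le x)

lemma gaussianReal_Ioi_sub_sqrt_mul_le (hv : v ≠ 0) {t : ℝ} (ht : 0 ≤ t) :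
    gaussianReal m v (Ioi (m - √v * t)) ≤ ENNReal.ofReal (t / √(2 * π) + 1 / 2) := by
  have hvt : 0 ≤ √v * t := by positivity
  have hdensity : (√(2 * π * v))⁻¹ * (√v * t) = t / √(2 * π) := by
    rw [sqrt_mul (by positivity)]
    field_simp
  calc gaussianReal m v (Ioi (m - √v * t))
      ≤ gaussianReal m v (Ioc (m - √v * t) m) + gaussianReal m v (Ioi m) := by
        rw [← Ioc_union_Ioi_eq_Ioi (sub_le_self m hvt)]
        exact measure_union_le _ _
    _ ≤ ENNReal.ofReal (√(2 * π * v))⁻¹ * volume (Ioc (m - √v * t) m) + 2⁻¹ := by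
        rw [gaussianReal_Ioi_self hv]
        gcongr
        exact gaussianReal_le_mul_volume hv _
    _ = ENNReal.ofReal (t / √(2 * π) + 1 / 2) := by
        rw [volume_Ioc, sub_sub_cancel, ← ENNReal.ofReal_mul (by positivity), hdensity,
          ENNReal.ofReal_add (by positivity) (by norm_num), one_div,
          ENNReal.ofReal_inv_of_pos two_pos, ENNReal.ofReal_ofNat]

lemma gaussianReal_Ioi_add_sqrt_mul_le_mul_exp (hv : v ≠ 0) {c ε : ℝ} (hc : 0 < c)
    (hε : ε ≤ 1) (h_le_one : 1.25 * exp (-c ^ 2 / 2) ≤ 1) :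
    gaussianReal m v (Ioi (m + √v * (c - ε / (2 * c)))) ≤
      ENNReal.ofReal (1.25 * exp (-c ^ 2 / 2)) := by
  rcases le_or_gt 0 (c - ε / (2 * c)) with hs | hs
  · exact (gaussianReal_Ioi_add_sqrt_mul_le hv hs).trans
      (ENNReal.ofReal_le_ofReal (exp_neg_sq_sub_div_le hc.ne' hε))
  · rw [← sub_neg_eq_add, ← mul_neg, neg_sub]
    exact (gaussianReal_Ioi_sub_sqrt_mul_le hv (by linarith)).trans
      (ENNReal.ofReal_le_ofReal (div_sqrt_two_pi_add_half_le hc hε hs h_le_one))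

end Tail

lemma gaussianReal_setOf_sq_sub_sq_gt (μ μ' K : ℝ) (v : ℝ≥0) :
    gaussianReal μ v {x | (x - μ') ^ 2 - (x - μ) ^ 2 > K} =
      gaussianReal 0 (⟨(μ - μ') ^ 2, sq_nonneg _⟩ * v) (Ioi ((K - (μ - μ') ^ 2) / 2)) := by
  have hmap : (gaussianReal μ v).map (fun x ↦ (μ - μ') * (x - μ)) =
      gaussianReal 0 (⟨(μ - μ') ^ 2, sq_nonneg _⟩ * v) := by
    rw [show (fun x ↦ (μ - μ') * (x - μ)) = ((μ - μ') * ·) ∘ (· - μ) from rfl,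
      ← Measure.map_map (by fun_prop) (by fun_prop), gaussianReal_map_sub_const,
      gaussianReal_map_const_mul, sub_self, mul_zero]
    rfl
  rw [← hmap, Measure.map_apply (by fun_prop) measurableSet_Ioi]
  congr 1
  ext x
  have hdiff : (x - μ') ^ 2 - (x - μ) ^ 2 = 2 * ((μ - μ') * (x - μ)) + (μ - μ') ^ 2 := by ring
  simp only [mem_ofPred_eq, mem_preimage, mem_Ioi, hdiff]
  constructor <;> intro h <;> linarith

end ProbabilityTheory

/-- Tail bound on the privacy-loss random variable of the Gaussian mechanism:
with `σ ≥ Δ·√(2 ln(1.25/δ))/ε` and `|μ − μ'| ≤ Δ`, the set of points where the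
log-likelihood ratio of `N(μ, σ²)` against `N(μ', σ²)` exceeds `ε`, namely
`{x : (x − μ')² − (x − μ)² > 2σ²ε}`, has `gaussianReal μ σ²`-measure at most `δ`. -/
theorem gaussian_privacy_loss_tail
    (ε δ Δ σ : ℝ) (hε : ε ∈ Set.Ioo (0 : ℝ) 1) (hδ : δ ∈ Set.Ioo (0 : ℝ) 1)
    (hΔ : 0 < Δ) (hσ : σ ≥ Δ * Real.sqrt (2 * Real.log (1.25 / δ)) / ε)
    (μ μ' : ℝ) (hμ : |μ - μ'| ≤ Δ) :
    gaussianReal μ ⟨σ ^ 2, sq_nonneg σ⟩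
        {x : ℝ | (x - μ') ^ 2 - (x - μ) ^ 2 > 2 * σ ^ 2 * ε}
      ≤ ENNReal.ofReal δ := by
  obtain ⟨hε0, hε1⟩ := hε
  obtain ⟨hδ0, hδ1⟩ := hδ
  set c := √(2 * log (1.25 / δ))
  have hc : 0 < c := sqrt_pos.2 (mul_pos two_pos (log_pos (by rw [lt_div_iff₀ hδ0]; linarith)))
  have hδc : 1.25 * exp (-c ^ 2 / 2) = δ :=
    mul_exp_neg_sq_sqrt_two_mul_log_div_two hδ0 (by linarith)
  have hσ0 : 0 < σ := (div_pos (mul_pos hΔ hc) hε0).trans_le hσ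
  rcases eq_or_ne μ μ' with rfl | hμμ'
  · simp [not_lt.2 (by positivity : 0 ≤ 2 * σ ^ 2 * ε)]
  have hμc : |μ - μ'| * c ≤ σ * ε := by
    rw [ge_iff_le, div_le_iff₀ hε0] at hσ
    nlinarith
  set w : ℝ≥0 := ⟨(μ - μ') ^ 2, sq_nonneg _⟩ * ⟨σ ^ 2, sq_nonneg σ⟩
  have hw_coe : (w : ℝ) = ((μ - μ') * σ) ^ 2 := by rw [mul_pow]; rfl
  have hw : w ≠ 0 := by
    rw [← NNReal.coe_ne_zero, hw_coe]
    exact pow_ne_zero 2 (mul_ne_zero (sub_ne_zero.2 hμμ') hσ0.ne')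
  have hthreshold : 0 + √w * (c - ε / (2 * c)) ≤ (2 * σ ^ 2 * ε - (μ - μ') ^ 2) / 2 := by
    rw [zero_add, hw_coe, sqrt_sq_eq_abs, abs_mul, abs_of_pos hσ0, ← sq_abs (μ - μ')]
    exact mul_mul_sub_div_le_of_mul_le (abs_nonneg _) hc hσ0.le hμc
  calc _ = gaussianReal 0 w (Ioi ((2 * σ ^ 2 * ε - (μ - μ') ^ 2) / 2)) :=
        gaussianReal_setOf_sq_sub_sq_gt μ μ' _ _
    _ ≤ gaussianReal 0 w (Ioi (0 + √w * (c - ε / (2 * c)))) :=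
        measure_mono (Ioi_subset_Ioi hthreshold)
    _ ≤ ENNReal.ofReal δ := by
        rw [← hδc]
        exact gaussianReal_Ioi_add_sqrt_mul_le_mul_exp hw hc hε1.le (hδc ▸ hδ1.le)
end

section
/- Let (α, 𝒜) and (β, ℬ) be measurable spaces, let μ, μ' be probability measures on α, let ε ≥ 0 and δ ≥ 0, and suppose that for every measurable set O ⊆ α, μ(O) ≤ e^ε · μ'(O) + δ. Let κ be a Markov kernel from α to β. Then for every measurable set T ⊆ β, (μ bind κ)(T) ≤ e^ε · (μ' bind κ)(T) + δ, where (μ bind κ)(T) = ∫ κ(x)(T) dμ(x). That is, (ε, δ)-indistinguishability is preserved under randomized post-processing. -/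
/-!
By the layer-cake formula, `∫⁻ f dμ = ∫₀¹ μ {f > t} dt` for a measurable `f` with values in
`[0, 1]`. Applying the hypothesis to each superlevel set and integrating over `t ∈ (0, 1)` gives
`∫⁻ f dμ ≤ e^ε ∫⁻ f dμ' + δ`, the additive term surviving unchanged because the interval has
length one. Taking `f x = κ x T` yields the claim.
-/

open MeasureTheory ProbabilityTheory Set
open scoped ENNReal

section

variable {α : Type*} [MeasurableSpace α]

theorem lintegral_ofReal_eq_setLIntegral_Ioo_meas_lt (μ : Measure α) {f : α → ℝ}
    (hf : Measurable f) (hf0 : 0 ≤ f) (hf1 : f ≤ 1) :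
    ∫⁻ x, ENNReal.ofReal (f x) ∂μ = ∫⁻ t in Ioo (0 : ℝ) 1, μ {x | t < f x} := by
  have hvanish : ∀ t : ℝ, (Iio 1).indicator (fun t => μ {x | t < f x}) t = μ {x | t < f x} := by
    intro t
    by_cases ht : t ∈ Iio 1
    · exact indicator_of_mem ht _
    · have hempty : {x | t < f x} = ∅ :=
        eq_empty_of_forall_notMem fun x hx => ht ((hx : t < f x).trans_le (hf1 x))
      rw [indicator_of_notMem ht, hempty, measure_empty]
  rw [lintegral_eq_lintegral_meas_lt μ (ae_of_all _ hf0) hf.aemeasurable, ← Ioi_inter_Iio,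
    inter_comm, ← setLIntegral_indicator measurableSet_Iio]
  simp_rw [hvanish]

theorem lintegral_le_mul_lintegral_add_of_forall_measure_le {μ ν : Measure α} {c d : ℝ≥0∞}
    (h : ∀ s, MeasurableSet s → μ s ≤ c * ν s + d) {f : α → ℝ≥0∞} (hf : Measurable f)
    (hf1 : ∀ x, f x ≤ 1) :
    ∫⁻ x, f x ∂μ ≤ c * ∫⁻ x, f x ∂ν + d := by
  set g : α → ℝ := fun x => (f x).toReal
  have hfg : f = fun x => ENNReal.ofReal (g x) := by
    funext x; exact (ENNReal.ofReal_toReal (ne_top_of_le_ne_top ENNReal.one_ne_top (hf1 x))).symm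
  have hg : Measurable g := hf.ennreal_toReal
  have hg1 : g ≤ 1 := fun x => ENNReal.toReal_le_of_le_ofReal zero_le_one (by simpa using hf1 x)
  have hmono : Measurable fun t : ℝ => ν {x | t < g x} :=
    Antitone.measurable fun s t hst => measure_mono fun x hx => hst.trans_lt hx
  rw [hfg, lintegral_ofReal_eq_setLIntegral_Ioo_meas_lt μ hg (fun x => ENNReal.toReal_nonneg) hg1,
    lintegral_ofReal_eq_setLIntegral_Ioo_meas_lt ν hg (fun x => ENNReal.toReal_nonneg) hg1]
  calc ∫⁻ t in Ioo (0 : ℝ) 1, μ {x | t < g x}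
      ≤ ∫⁻ t in Ioo 0 1, (c * ν {x | t < g x} + d) :=
        lintegral_mono fun t => h _ (measurableSet_lt measurable_const hg)
    _ = c * (∫⁻ t in Ioo 0 1, ν {x | t < g x}) + d := by
        rw [lintegral_add_right _ measurable_const, lintegral_const_mul _ hmono, setLIntegral_const,
          Real.volume_Ioo, sub_zero, ENNReal.ofReal_one, mul_one]

end

theorem randomized_post_processing_dp_general
    {α β : Type*} [MeasurableSpace α] [MeasurableSpace β]
    (μ μ' : Measure α)
    (ε δ : ℝ)
    (h : ∀ O : Set α, MeasurableSet O →
      μ O ≤ ENNReal.ofReal (Real.exp ε) * μ' O + ENNReal.ofReal δ)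
    (κ : Kernel α β) [IsMarkovKernel κ] (T : Set β) (hT : MeasurableSet T) :
    μ.bind κ T ≤ ENNReal.ofReal (Real.exp ε) * μ'.bind κ T + ENNReal.ofReal δ := by
  rw [Measure.bind_apply hT κ.aemeasurable, Measure.bind_apply hT κ.aemeasurable]
  exact lintegral_le_mul_lintegral_add_of_forall_measure_le h (κ.measurable_coe hT)
    fun x => prob_le_one

/-- Randomized post-processing preserves `(ε, δ)`-indistinguishability: if
`μ(O) ≤ e^ε·μ'(O) + δ` for all measurable `O` and `κ` is a Markov kernel, then
the compositions `μ bind κ` and `μ' bind κ` satisfy the same inequality. -/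
theorem randomized_post_processing_dp
    {α β : Type*} [MeasurableSpace α] [MeasurableSpace β]
    (μ μ' : Measure α) [IsProbabilityMeasure μ] [IsProbabilityMeasure μ']
    (ε δ : ℝ) (hε : 0 ≤ ε) (hδ : 0 ≤ δ)
    (h : ∀ O : Set α, MeasurableSet O →
      μ O ≤ ENNReal.ofReal (Real.exp ε) * μ' O + ENNReal.ofReal δ)
    (κ : Kernel α β) [IsMarkovKernel κ] (T : Set β) (hT : MeasurableSet T) :
    μ.bind κ T ≤ ENNReal.ofReal (Real.exp ε) * μ'.bind κ T + ENNReal.ofReal δ :=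
  randomized_post_processing_dp_general μ μ' ε δ h κ T hT
end

section
/- Let μ₁, μ₁' be probability measures on a measurable space α and μ₂, μ₂' be probability measures on a measurable space β. Suppose ε₁, ε₂, δ₁, δ₂ ≥ 0, that for every measurable O ⊆ α, μ₁(O) ≤ e^{ε₁} · μ₁'(O) + δ₁, and that for every measurable O ⊆ β, μ₂(O) ≤ e^{ε₂} · μ₂'(O) + δ₂. Then for every measurable set A ⊆ α × β, the product measures satisfy (μ₁ × μ₂)(A) ≤ e^{ε₁ + ε₂} · (μ₁' × μ₂')(A) + δ₁ + δ₂. That is, releasing the outputs of an (ε₁, δ₁)-DP mechanism and an independent (ε₂, δ₂)-DP mechanism together satisfies (ε₁ + ε₂, δ₁ + δ₂)-differential privacy. -/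
/-!
For `f` with values in `[0, 1]`, the layer-cake formula writes `∫⁻ f ∂μ` as an integral of
`μ {f > t}` over `t ∈ (0, 1)`, an interval of length one, so the set-wise bound
`μ O ≤ c μ' O + d` integrates to `∫⁻ f ∂μ ≤ c ∫⁻ f ∂μ' + d`. For a set `A` in the product, each
slice satisfies `μ₂ Aₓ ≤ min (c₂ μ₂' Aₓ) 1 + d₂` because `μ₂ Aₓ ≤ 1`; integrating in `x` against
`μ₁` and applying the integral bound to the `[0, 1]`-valued function `x ↦ min (c₂ μ₂' Aₓ) 1`
gives the composition bound.
-/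

open MeasureTheory

namespace MeasureTheory

open Set ENNReal

variable {α β : Type*} [MeasurableSpace α] [MeasurableSpace β]

theorem lintegral_le_mul_lintegral_add_of_forall_measure_le {μ μ' : Measure α} {c d : ℝ≥0∞}
    (h : ∀ O, MeasurableSet O → μ O ≤ c * μ' O + d)
    {f : α → ℝ≥0∞} (hf : Measurable f) (hf_le_one : ∀ x, f x ≤ 1) :
    ∫⁻ x, f x ∂μ ≤ c * ∫⁻ x, f x ∂μ' + d := by
  set g : α → ℝ := fun x => (f x).toReal
  have layercake (ν : Measure α) : ∫⁻ x, f x ∂ν = ∫⁻ t in Ioi 0, ν {a | t < g a} := by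
    rw [← lintegral_eq_lintegral_meas_lt ν (.of_forall fun _ => toReal_nonneg)
      hf.ennreal_toReal.aemeasurable]
    exact lintegral_congr fun x =>
      (ofReal_toReal (ne_top_of_le_ne_top one_ne_top (hf_le_one x))).symm
  have level_le (t : ℝ) :
      μ {a | t < g a} ≤ c * μ' {a | t < g a} + (Iio 1).indicator (fun _ => d) t := by
    by_cases ht : t < 1
    · rw [indicator_of_mem (show t ∈ Iio 1 from ht)]
      exact h _ (measurableSet_lt measurable_const hf.ennreal_toReal)
    · have hempty : {a | t < g a} = ∅ := eq_empty_of_forall_notMem fun a ha =>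
        ht (ha.trans_le (toReal_le_of_le_ofReal zero_le_one (by simpa using hf_le_one a)))
      simp [hempty]
  have level_measurable : Measurable fun t : ℝ => μ' {a | t < g a} :=
    Antitone.measurable fun _ _ hst => measure_mono fun _ ha => hst.trans_lt ha
  calc ∫⁻ x, f x ∂μ = ∫⁻ t in Ioi 0, μ {a | t < g a} := layercake μ
    _ ≤ ∫⁻ t in Ioi 0, (c * μ' {a | t < g a} + (Iio 1).indicator (fun _ => d) t) :=
      lintegral_mono level_le
    _ = c * ∫⁻ x, f x ∂μ' + d := by
      rw [lintegral_add_left (level_measurable.const_mul c), lintegral_const_mul _ level_measurable,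
        lintegral_indicator_const measurableSet_Iio, Measure.restrict_apply measurableSet_Iio,
        Iio_inter_Ioi, Real.volume_Ioo, ← layercake]
      simp

theorem Measure.prod_apply_le_mul_add_add_of_forall_measure_le
    {μ₁ μ₁' : Measure α} {μ₂ μ₂' : Measure β} [IsZeroOrProbabilityMeasure μ₁]
    [IsZeroOrProbabilityMeasure μ₂] [SFinite μ₂'] {c₁ c₂ d₁ d₂ : ℝ≥0∞}
    (h₁ : ∀ O, MeasurableSet O → μ₁ O ≤ c₁ * μ₁' O + d₁)
    (h₂ : ∀ O, MeasurableSet O → μ₂ O ≤ c₂ * μ₂' O + d₂)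
    {A : Set (α × β)} (hA : MeasurableSet A) :
    (μ₁.prod μ₂) A ≤ c₁ * c₂ * (μ₁'.prod μ₂') A + d₁ + d₂ := by
  have slice_measurable : Measurable fun x => μ₂' (Prod.mk x ⁻¹' A) :=
    measurable_measure_prodMk_left hA
  set G : α → ℝ≥0∞ := fun x => min (c₂ * μ₂' (Prod.mk x ⁻¹' A)) 1
  have slice_le (x : α) : μ₂ (Prod.mk x ⁻¹' A) ≤ G x + d₂ := by
    rw [← min_add_add_right]
    exact le_min (h₂ _ (measurable_prodMk_left hA)) (prob_le_one.trans le_self_add)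
  calc (μ₁.prod μ₂) A = ∫⁻ x, μ₂ (Prod.mk x ⁻¹' A) ∂μ₁ := Measure.prod_apply hA
    _ ≤ ∫⁻ x, (G x + d₂) ∂μ₁ := lintegral_mono slice_le
    _ ≤ ∫⁻ x, G x ∂μ₁ + d₂ := by
      rw [lintegral_add_right _ measurable_const, lintegral_const]
      gcongr
      exact mul_le_of_le_one_right' prob_le_one
    _ ≤ c₁ * ∫⁻ x, G x ∂μ₁' + d₁ + d₂ := by
      gcongr
      exact lintegral_le_mul_lintegral_add_of_forall_measure_le h₁
        ((slice_measurable.const_mul c₂).min measurable_const) fun _ => min_le_right _ _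
    _ ≤ c₁ * ∫⁻ x, c₂ * μ₂' (Prod.mk x ⁻¹' A) ∂μ₁' + d₁ + d₂ := by
      gcongr with x
      exact min_le_left _ _
    _ = c₁ * c₂ * (μ₁'.prod μ₂') A + d₁ + d₂ := by
      rw [lintegral_const_mul _ slice_measurable, Measure.prod_apply hA, mul_assoc]

end MeasureTheory

theorem composition_dp_general
    {α β : Type*} [MeasurableSpace α] [MeasurableSpace β]
    (μ₁ μ₁' : Measure α) [IsProbabilityMeasure μ₁]
    (μ₂ μ₂' : Measure β) [IsProbabilityMeasure μ₂] [IsProbabilityMeasure μ₂']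
    (ε₁ ε₂ δ₁ δ₂ : ℝ)
    (h₁ : ∀ O : Set α, MeasurableSet O →
      μ₁ O ≤ ENNReal.ofReal (Real.exp ε₁) * μ₁' O + ENNReal.ofReal δ₁)
    (h₂ : ∀ O : Set β, MeasurableSet O →
      μ₂ O ≤ ENNReal.ofReal (Real.exp ε₂) * μ₂' O + ENNReal.ofReal δ₂)
    (A : Set (α × β)) (hA : MeasurableSet A) :
    (μ₁.prod μ₂) A
      ≤ ENNReal.ofReal (Real.exp (ε₁ + ε₂)) * (μ₁'.prod μ₂') A
        + ENNReal.ofReal δ₁ + ENNReal.ofReal δ₂ := by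
  rw [Real.exp_add, ENNReal.ofReal_mul (Real.exp_pos ε₁).le]
  exact Measure.prod_apply_le_mul_add_add_of_forall_measure_le h₁ h₂ hA

/-- Basic composition for independent mechanisms: if `μ₁, μ₁'` are
`(ε₁, δ₁)`-indistinguishable and `μ₂, μ₂'` are `(ε₂, δ₂)`-indistinguishable,
then the product measures are `(ε₁ + ε₂, δ₁ + δ₂)`-indistinguishable. -/
theorem composition_dp
    {α β : Type*} [MeasurableSpace α] [MeasurableSpace β]
    (μ₁ μ₁' : Measure α) [IsProbabilityMeasure μ₁] [IsProbabilityMeasure μ₁']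
    (μ₂ μ₂' : Measure β) [IsProbabilityMeasure μ₂] [IsProbabilityMeasure μ₂']
    (ε₁ ε₂ δ₁ δ₂ : ℝ) (hε₁ : 0 ≤ ε₁) (hε₂ : 0 ≤ ε₂) (hδ₁ : 0 ≤ δ₁) (hδ₂ : 0 ≤ δ₂)
    (h₁ : ∀ O : Set α, MeasurableSet O →
      μ₁ O ≤ ENNReal.ofReal (Real.exp ε₁) * μ₁' O + ENNReal.ofReal δ₁)
    (h₂ : ∀ O : Set β, MeasurableSet O →
      μ₂ O ≤ ENNReal.ofReal (Real.exp ε₂) * μ₂' O + ENNReal.ofReal δ₂)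
    (A : Set (α × β)) (hA : MeasurableSet A) :
    (μ₁.prod μ₂) A
      ≤ ENNReal.ofReal (Real.exp (ε₁ + ε₂)) * (μ₁'.prod μ₂') A
        + ENNReal.ofReal δ₁ + ENNReal.ofReal δ₂ :=
  composition_dp_general μ₁ μ₁' μ₂ μ₂' ε₁ ε₂ δ₁ δ₂ h₁ h₂ A hA
end

section
/- Let ι be a nonempty finite index set, λ > 0, C ≥ 0, and let s, s' : ι → ℝ satisfy |s i − s' i| ≤ C for every i ∈ ι. Then for every i ∈ ι, the softmax probabilities satisfy exp(s i / λ) / (∑_{j ∈ ι} exp(s j / λ)) ≤ exp(2C/λ) · exp(s' i / λ) / (∑_{j ∈ ι} exp(s' j / λ)). In particular, with λ = 2C/ε, the exponential mechanism selecting an index from a finite candidate set with probability proportional to exp(ε · s i / (2C)), where the score function has sensitivity at most C, is ε-differentially private. -/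
open Finset

namespace Real

lemma exp_le_exp_mul_exp_of_abs_sub_le {a b δ : ℝ} (h : |a - b| ≤ δ) :
    exp a ≤ exp δ * exp b := by
  rw [← exp_add, exp_le_exp]
  linarith [(abs_le.1 h).2]

lemma sum_exp_le_exp_mul_sum_exp {ι : Type*} (u : Finset ι) {t t' : ι → ℝ} {δ : ℝ}
    (h : ∀ j ∈ u, |t j - t' j| ≤ δ) :
    ∑ j ∈ u, exp (t' j) ≤ exp δ * ∑ j ∈ u, exp (t j) := by
  rw [mul_sum]
  exact sum_le_sum fun j hj =>
    exp_le_exp_mul_exp_of_abs_sub_le (by rw [abs_sub_comm]; exact h j hj)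

/-- Shifting every exponent by at most `δ` moves the numerator and the normaliser of a
softmax weight by a factor of at most `exp δ` each, in opposite directions. -/
lemma exp_div_sum_exp_le_exp_two_mul {ι : Type*} [Fintype ι] {t t' : ι → ℝ} {δ : ℝ}
    (h : ∀ j, |t j - t' j| ≤ δ) (i : ι) :
    exp (t i) / ∑ j, exp (t j) ≤ exp (2 * δ) * (exp (t' i) / ∑ j, exp (t' j)) := by
  have hpos : ∀ v : ι → ℝ, 0 < ∑ j, exp (v j) := fun v =>
    sum_pos (fun j _ => exp_pos _) ⟨i, mem_univ i⟩
  have hden := sum_exp_le_exp_mul_sum_exp univ fun j _ => h j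
  rw [div_le_iff₀ (hpos t), two_mul, exp_add]
  calc exp (t i) ≤ exp δ * exp (t' i) := exp_le_exp_mul_exp_of_abs_sub_le (h i)
    _ = exp δ * exp (t' i) / (∑ j, exp (t' j)) * ∑ j, exp (t' j) := by
        field_simp [(hpos t').ne']
    _ ≤ exp δ * exp (t' i) / (∑ j, exp (t' j)) * (exp δ * ∑ j, exp (t j)) := by
        gcongr
    _ = exp δ * exp δ * (exp (t' i) / ∑ j, exp (t' j)) * ∑ j, exp (t j) := by ring

end Real

theorem softmax_exponential_mechanism_dp_general
    {ι : Type*} [Fintype ι]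
    (lam : ℝ) (hlam : 0 < lam) (C : ℝ)
    (s s' : ι → ℝ) (h : ∀ i, |s i - s' i| ≤ C) (i : ι) :
    Real.exp (s i / lam) / (∑ j, Real.exp (s j / lam))
      ≤ Real.exp (2 * C / lam)
          * (Real.exp (s' i / lam) / (∑ j, Real.exp (s' j / lam))) := by
  have hscaled : ∀ j, |s j / lam - s' j / lam| ≤ C / lam := fun j => by
    rw [← sub_div, abs_div, abs_of_pos hlam]
    exact div_le_div_of_nonneg_right (h j) hlam.le
  rw [mul_div_assoc]
  exact Real.exp_div_sum_exp_le_exp_two_mul hscaled i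

/-- The exponential mechanism (softmax selection) is differentially private: if
two score functions `s, s'` on a nonempty finite candidate set differ by at most
`C` at every index, then for every index `i` the softmax probability at scale
`lam` under `s` is at most `exp(2C/lam)` times that under `s'`. -/
theorem softmax_exponential_mechanism_dp
    {ι : Type*} [Fintype ι] [Nonempty ι]
    (lam : ℝ) (hlam : 0 < lam) (C : ℝ) (hC : 0 ≤ C)
    (s s' : ι → ℝ) (h : ∀ i, |s i - s' i| ≤ C) (i : ι) :
    Real.exp (s i / lam) / (∑ j, Real.exp (s j / lam))
      ≤ Real.exp (2 * C / lam)
          * (Real.exp (s' i / lam) / (∑ j, Real.exp (s' j / lam))) :=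
  softmax_exponential_mechanism_dp_general lam hlam C s s' h i
end

section
/- Let σ > 0, Δ > 0, ε ≥ 0, and let Φ denote the cumulative distribution function of the standard Gaussian measure gaussianReal 0 1 on ℝ. Then the supremum over measurable sets S ⊆ ℝ of gaussianReal 0 σ² (S) − e^ε · gaussianReal Δ σ² (S) equals Φ(Δ/(2σ) − ε·σ/Δ) − e^ε · Φ(−Δ/(2σ) − ε·σ/Δ). Consequently, the one-dimensional Gaussian mechanism with noise standard deviation σ on a statistic of sensitivity Δ is (ε, δ)-differentially private if and only if Φ(Δ/(2σ) − ε·σ/Δ) − e^ε · Φ(−Δ/(2σ) − ε·σ/Δ) ≤ δ. -/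
/-!
Write `P = N(0, σ²)`, `Q = N(Δ, σ²)` with densities `p, q`. For measurable `S`,
`P S - e^ε Q S = ∫_S (p - e^ε q)`, which is largest on the set where `p ≥ e^ε q`. Since the
likelihood ratio `p / q` is monotone this set is the half-line `x ≤ Δ/2 - εσ²/Δ`, and
standardising turns its value into the two `Φ` terms. The reflection `x ↦ Δ - x` exchanges
`P` and `Q`, so the two one-sided privacy conditions coincide, and each is equivalent to the
supremum being at most `δ`.
-/

open MeasureTheory ProbabilityTheory
open scoped NNReal ENNReal

/-- The cumulative distribution function `Φ` of the standard Gaussian measure. -/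
noncomputable def stdGaussianCDF (x : ℝ) : ℝ :=
  (gaussianReal 0 1 (Set.Iic x)).toReal

open Real Set

theorem Real.biSup_eq_of_forall_le {ι : Type*} {p : ι → Prop} {f : ι → ℝ} {j : ι} (hj : p j)
    (hle : ∀ i, p i → f i ≤ f j) (h0 : 0 ≤ f j) : ⨆ (i) (_ : p i), f i = f j := by
  have : Nonempty ι := ⟨j⟩
  have hbound : ∀ i, ⨆ (_ : p i), f i ≤ f j := fun i ↦ Real.iSup_le (hle i) h0
  exact le_antisymm (ciSup_le hbound)
    (le_ciSup_of_le ⟨f j, forall_mem_range.2 hbound⟩ j (ciSup_pos (f := fun _ ↦ f j) hj).ge)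

theorem MeasureTheory.measure_le_ofReal_mul_add_ofReal_iff {α : Type*} [MeasurableSpace α]
    {P Q : Measure α} [IsFiniteMeasure P] [IsFiniteMeasure Q] {c δ : ℝ} (hc : 0 ≤ c)
    (hδ : 0 ≤ δ) (S : Set α) :
    P S ≤ ENNReal.ofReal c * Q S + ENNReal.ofReal δ ↔ (P S).toReal - c * (Q S).toReal ≤ δ := by
  rw [← ENNReal.ofReal_toReal (measure_ne_top P S), ← ENNReal.ofReal_toReal (measure_ne_top Q S),
    ← ENNReal.ofReal_mul hc, ← ENNReal.ofReal_add (by positivity) hδ,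
    ENNReal.ofReal_le_ofReal_iff (by positivity), sub_le_iff_le_add']
  simp only [ENNReal.toReal_ofReal ENNReal.toReal_nonneg]

namespace ProbabilityTheory

variable {v : ℝ≥0}

theorem gaussianReal_preimage_const_sub (μ y : ℝ) {S : Set ℝ} (hS : MeasurableSet S) :
    gaussianReal μ v ((y - ·) ⁻¹' S) = gaussianReal (y - μ) v S := by
  rw [← gaussianReal_map_const_sub, Measure.map_apply (by fun_prop) hS]

/-- Reflection through `(μ₀ + μ₁) / 2` swaps the two Gaussians. -/
theorem gaussianReal_le_mul_add_swap {μ₀ μ₁ : ℝ} {a b : ℝ≥0∞}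
    (h : ∀ S, MeasurableSet S → gaussianReal μ₀ v S ≤ a * gaussianReal μ₁ v S + b)
    {S : Set ℝ} (hS : MeasurableSet S) :
    gaussianReal μ₁ v S ≤ a * gaussianReal μ₀ v S + b := by
  have := h _ (hS.preimage (measurable_const_sub (μ₀ + μ₁)))
  rwa [gaussianReal_preimage_const_sub _ _ hS, gaussianReal_preimage_const_sub _ _ hS,
    add_sub_cancel_left, add_sub_cancel_right] at this

theorem gaussianReal_toReal_sub_mul_eq_setIntegral {v₀ v₁ : ℝ≥0} (μ₀ μ₁ : ℝ) (hv₀ : v₀ ≠ 0)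
    (hv₁ : v₁ ≠ 0) (c : ℝ) (S : Set ℝ) :
    (gaussianReal μ₀ v₀ S).toReal - c * (gaussianReal μ₁ v₁ S).toReal
      = ∫ x in S, (gaussianPDFReal μ₀ v₀ x - c * gaussianPDFReal μ₁ v₁ x) := by
  rw [integral_sub (integrable_gaussianPDFReal _ _).integrableOn
      ((integrable_gaussianPDFReal _ _).const_mul c).integrableOn, integral_const_mul,
    gaussianReal_apply_eq_integral _ hv₀, gaussianReal_apply_eq_integral _ hv₁,
    ENNReal.toReal_ofReal (setIntegral_nonneg_of_ae (.of_forall (gaussianPDFReal_nonneg _ _))),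
    ENNReal.toReal_ofReal (setIntegral_nonneg_of_ae (.of_forall (gaussianPDFReal_nonneg _ _)))]

theorem setOf_exp_mul_gaussianPDFReal_le {μ₀ μ₁ : ℝ} (hμ : μ₀ < μ₁) (hv : v ≠ 0) (ε : ℝ) :
    {x | 0 ≤ gaussianPDFReal μ₀ v x - exp ε * gaussianPDFReal μ₁ v x}
      = Iic ((μ₀ + μ₁) / 2 - ε * v / (μ₁ - μ₀)) := by
  ext x
  have hv' : (0 : ℝ) < v := by positivity
  have hd : 0 < μ₁ - μ₀ := sub_pos.2 hμ
  have hsq : -(x - μ₀) ^ 2 / (2 * v) - -(x - μ₁) ^ 2 / (2 * v)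
      = (μ₁ - μ₀) * (μ₀ + μ₁ - 2 * x) / (2 * v) := by
    field_simp; ring
  simp only [mem_ofPred_eq, mem_Iic, sub_nonneg, gaussianPDFReal, mul_left_comm (exp ε),
    mul_le_mul_iff_right₀ (by positivity : 0 < (√(2 * π * v))⁻¹), ← exp_add, exp_le_exp]
  rw [← le_sub_iff_add_le, hsq, le_div_iff₀ (by positivity), le_sub_iff_add_le,
    ← le_sub_iff_add_le', div_le_iff₀ hd]
  constructor <;> intro <;> linarith

theorem gaussianReal_Iic_toReal (hv : v ≠ 0) (m r : ℝ) :
    (gaussianReal m v (Iic r)).toReal = stdGaussianCDF ((r - m) / √v) := by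
  have hs : 0 < √(v : ℝ) := by positivity
  have hmap : (gaussianReal m v).map (fun x ↦ (x - m) / √v) = gaussianReal 0 1 := by
    rw [show (fun x ↦ (x - m) / √v) = (· / √v) ∘ (· - m) from rfl,
      ← Measure.map_map (by fun_prop) (by fun_prop), gaussianReal_map_sub_const,
      gaussianReal_map_div_const, sub_self, zero_div]
    congr 1
    ext
    simp [hv]
  have hpre : (fun x ↦ (x - m) / √v) ⁻¹' Iic ((r - m) / √v) = Iic r := by
    ext x
    simp [div_le_div_iff_of_pos_right hs]
  rw [stdGaussianCDF, ← hmap, Measure.map_apply (by fun_prop) measurableSet_Iic, hpre]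

/-- Neyman–Pearson: `∫_S (p₀ - e^ε p₁)` is maximal where the integrand is nonnegative. -/
theorem gaussianReal_toReal_sub_exp_mul_le_Iic {μ₀ μ₁ : ℝ} (hμ : μ₀ < μ₁) (hv : v ≠ 0) (ε : ℝ)
    {S : Set ℝ} (hS : MeasurableSet S) :
    (gaussianReal μ₀ v S).toReal - exp ε * (gaussianReal μ₁ v S).toReal
      ≤ (gaussianReal μ₀ v (Iic ((μ₀ + μ₁) / 2 - ε * v / (μ₁ - μ₀)))).toReal
        - exp ε * (gaussianReal μ₁ v (Iic ((μ₀ + μ₁) / 2 - ε * v / (μ₁ - μ₀)))).toReal := by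
  rw [gaussianReal_toReal_sub_mul_eq_setIntegral _ _ hv hv,
    gaussianReal_toReal_sub_mul_eq_setIntegral _ _ hv hv,
    ← setOf_exp_mul_gaussianPDFReal_le hμ hv ε]
  exact setIntegral_le_nonneg hS (by fun_prop)
    ((integrable_gaussianPDFReal _ _).sub ((integrable_gaussianPDFReal _ _).const_mul _))

end ProbabilityTheory

theorem analytic_gaussian_mechanism_general
    (σ Δ ε δ : ℝ) (hσ : 0 < σ) (hΔ : 0 < Δ) (hδ : 0 ≤ δ) :
    (⨆ (S : Set ℝ) (_ : MeasurableSet S),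
        ((gaussianReal 0 ⟨σ ^ 2, sq_nonneg σ⟩ S).toReal
          - Real.exp ε * (gaussianReal Δ ⟨σ ^ 2, sq_nonneg σ⟩ S).toReal))
      = stdGaussianCDF (Δ / (2 * σ) - ε * σ / Δ)
          - Real.exp ε * stdGaussianCDF (-(Δ / (2 * σ)) - ε * σ / Δ) ∧
    ((∀ S : Set ℝ, MeasurableSet S →
        gaussianReal 0 ⟨σ ^ 2, sq_nonneg σ⟩ S
            ≤ ENNReal.ofReal (Real.exp ε) * gaussianReal Δ ⟨σ ^ 2, sq_nonneg σ⟩ S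
              + ENNReal.ofReal δ ∧
          gaussianReal Δ ⟨σ ^ 2, sq_nonneg σ⟩ S
            ≤ ENNReal.ofReal (Real.exp ε) * gaussianReal 0 ⟨σ ^ 2, sq_nonneg σ⟩ S
              + ENNReal.ofReal δ)
      ↔ stdGaussianCDF (Δ / (2 * σ) - ε * σ / Δ)
          - Real.exp ε * stdGaussianCDF (-(Δ / (2 * σ)) - ε * σ / Δ) ≤ δ) := by
  set v : ℝ≥0 := ⟨σ ^ 2, sq_nonneg σ⟩
  have hv : v ≠ 0 := ne_of_gt (show (0 : ℝ) < σ ^ 2 by positivity)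
  have hv_coe : (v : ℝ) = σ ^ 2 := rfl
  have hsqrt : √(v : ℝ) = σ := hv_coe ▸ Real.sqrt_sq hσ.le
  have hmax := fun S (hS : MeasurableSet S) ↦ gaussianReal_toReal_sub_exp_mul_le_Iic hΔ hv ε hS
  have hval : (gaussianReal 0 v (Iic ((0 + Δ) / 2 - ε * v / (Δ - 0)))).toReal
        - exp ε * (gaussianReal Δ v (Iic ((0 + Δ) / 2 - ε * v / (Δ - 0)))).toReal
      = stdGaussianCDF (Δ / (2 * σ) - ε * σ / Δ)
        - exp ε * stdGaussianCDF (-(Δ / (2 * σ)) - ε * σ / Δ) := by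
    rw [gaussianReal_Iic_toReal hv, gaussianReal_Iic_toReal hv, hsqrt, hv_coe, sub_zero,
      zero_add]
    congr 3 <;> field_simp [hΔ.ne'] <;> ring
  have one_sided : (∀ S, MeasurableSet S →
      gaussianReal 0 v S ≤ ENNReal.ofReal (exp ε) * gaussianReal Δ v S + ENNReal.ofReal δ)
      ↔ stdGaussianCDF (Δ / (2 * σ) - ε * σ / Δ)
        - exp ε * stdGaussianCDF (-(Δ / (2 * σ)) - ε * σ / Δ) ≤ δ := by
    simp_rw [measure_le_ofReal_mul_add_ofReal_iff (exp_nonneg ε) hδ]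
    exact ⟨fun h ↦ hval ▸ h _ measurableSet_Iic,
      fun h S hS ↦ (hmax S hS).trans (hval.trans_le h)⟩
  refine ⟨(Real.biSup_eq_of_forall_le measurableSet_Iic hmax ?_).trans hval, ?_⟩
  · simpa using hmax ∅ .empty
  rw [← one_sided]
  exact ⟨fun h S hS ↦ (h S hS).1, fun h S hS ↦ ⟨h S hS, gaussianReal_le_mul_add_swap h hS⟩⟩

/-- Analytic Gaussian mechanism (Balle–Wang): the supremum over measurable sets
`S` of `N(0,σ²)(S) − e^ε·N(Δ,σ²)(S)` equals
`Φ(Δ/(2σ) − εσ/Δ) − e^ε·Φ(−Δ/(2σ) − εσ/Δ)`; consequently the one-dimensional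
Gaussian mechanism with noise scale `σ` at sensitivity `Δ` is `(ε, δ)`-DP
(i.e. `N(0,σ²)` and `N(Δ,σ²)` are mutually `(ε, δ)`-indistinguishable) iff
this quantity is at most `δ`. -/
theorem analytic_gaussian_mechanism
    (σ Δ ε δ : ℝ) (hσ : 0 < σ) (hΔ : 0 < Δ) (hε : 0 ≤ ε) (hδ : 0 ≤ δ) :
    (⨆ (S : Set ℝ) (_ : MeasurableSet S),
        ((gaussianReal 0 ⟨σ ^ 2, sq_nonneg σ⟩ S).toReal
          - Real.exp ε * (gaussianReal Δ ⟨σ ^ 2, sq_nonneg σ⟩ S).toReal))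
      = stdGaussianCDF (Δ / (2 * σ) - ε * σ / Δ)
          - Real.exp ε * stdGaussianCDF (-(Δ / (2 * σ)) - ε * σ / Δ) ∧
    ((∀ S : Set ℝ, MeasurableSet S →
        gaussianReal 0 ⟨σ ^ 2, sq_nonneg σ⟩ S
            ≤ ENNReal.ofReal (Real.exp ε) * gaussianReal Δ ⟨σ ^ 2, sq_nonneg σ⟩ S
              + ENNReal.ofReal δ ∧
          gaussianReal Δ ⟨σ ^ 2, sq_nonneg σ⟩ S
            ≤ ENNReal.ofReal (Real.exp ε) * gaussianReal 0 ⟨σ ^ 2, sq_nonneg σ⟩ S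
              + ENNReal.ofReal δ)
      ↔ stdGaussianCDF (Δ / (2 * σ) - ε * σ / Δ)
          - Real.exp ε * stdGaussianCDF (-(Δ / (2 * σ)) - ε * σ / Δ) ≤ δ) :=
  analytic_gaussian_mechanism_general σ Δ ε δ hσ hΔ hδ
end
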